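/- For x = ∑_{n=1}^∞ (−1)^n ε_n(x)/(d_1⋯d_n) and y = ∑_{n=1}^∞ (−1)^n ε_n(y)/(d_1⋯d_n), if there exists m such that ε_n(x) = ε_n(y) for all n < 2m and ε_{2m}(x) < ε_{2m}(y), where the tails of both representations are not of the exceptional eventually-(d_k−1,0) or (0,d_k−1) alternating types making equality possible, then x < y. More simply: if ε_n(x) = ε_n(y) for n < 2m and ε_{2m}(x) < ε_{2m}(y), then x ≤ y. -/

import Mathlib

open Finset

/-- Product d_1 d_2 ... d_n. -/
noncomputable def P (d : ℕ → ℕ) (n : ℕ) : ℝ := ∏ i ∈ Finset.Icc 1 n, (d i : ℝ)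

/-- The alternating Cantor series sum ∑_{n≥1} (-1)^n ε_n/(d_1...d_n). -/
noncomputable def negaSum (d ε : ℕ → ℕ) : ℝ :=
  ∑' n : ℕ, (-1 : ℝ) ^ (n + 1) * (ε (n + 1) : ℝ) / P d (n + 1)

/-- a₀ = ∑_{n≥1} (-1)^{n+1}/(d_1...d_n). -/
noncomputable def a0 (d : ℕ → ℕ) : ℝ := ∑' n : ℕ, (-1 : ℝ) ^ n / P d (n + 1)

open Filter Topology

/-! The difference of the two expansions is the alternating series with coefficients
`c n = η n - ε n`, which vanish before `2m`, satisfy `c (2m) ≥ 1` and `|c n| ≤ d n - 1`.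
The first nonzero term contributes at least `1 / P d (2m)`, while the remaining terms are
dominated by the expansion with maximal digits, which telescopes:
`∑_{n > N} (d n - 1) / P d n = 1 / P d N`. -/

lemma P_zero (d : ℕ → ℕ) : P d 0 = 1 := by simp [P]

lemma P_succ (d : ℕ → ℕ) (n : ℕ) : P d (n + 1) = P d n * d (n + 1) := by
  rw [P, P, prod_Icc_succ_top (by omega)]

section

variable {d : ℕ → ℕ} (hd : ∀ n, 1 ≤ n → 2 ≤ d n)
include hd

lemma two_pow_le_P (n : ℕ) : (2 : ℝ) ^ n ≤ P d n := by
  induction n with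
  | zero => simp [P_zero]
  | succ k ih =>
    have h2 : (2 : ℝ) ≤ d (k + 1) := by exact_mod_cast hd (k + 1) (by omega)
    rw [pow_succ, P_succ]
    exact mul_le_mul ih h2 two_pos.le ((pow_pos two_pos k).le.trans ih)

lemma P_pos (n : ℕ) : 0 < P d n := (pow_pos two_pos n).trans_le (two_pow_le_P hd n)

lemma tendsto_inv_P : Tendsto (fun n => (P d n)⁻¹) atTop (𝓝 0) :=
  tendsto_inv_atTop_zero.comp <|
    tendsto_atTop_mono (two_pow_le_P hd) (tendsto_pow_atTop_atTop_of_one_lt one_lt_two)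

lemma one_le_d_succ (n : ℕ) : (1 : ℝ) ≤ d (n + 1) := by
  exact_mod_cast (hd (n + 1) (by omega)).trans' one_le_two

lemma cast_digit_le {a : ℕ → ℕ} (ha : ∀ n, 1 ≤ n → a n ≤ d n - 1) (n : ℕ) (hn : 1 ≤ n) :
    (a n : ℝ) ≤ d n - 1 := by
  have : a n + 1 ≤ d n := by have := ha n hn; have := hd n hn; omega
  rw [le_sub_iff_add_le]
  exact_mod_cast this

lemma abs_cast_digit_le {a : ℕ → ℕ} (ha : ∀ n, 1 ≤ n → a n ≤ d n - 1) (n : ℕ) (hn : 1 ≤ n) :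
    |(a n : ℝ)| ≤ d n - 1 := by
  rw [Nat.abs_cast]
  exact cast_digit_le hd ha n hn

lemma inv_P_sub_inv_P_succ (n : ℕ) :
    (P d n)⁻¹ - (P d (n + 1))⁻¹ = ((d (n + 1) : ℝ) - 1) / P d (n + 1) := by
  have hPn := (P_pos hd n).ne'
  have hd0 : (d (n + 1) : ℝ) ≠ 0 := (zero_lt_one.trans_le (one_le_d_succ hd n)).ne'
  rw [P_succ]
  field_simp

lemma hasSum_maxDigit_tail (N : ℕ) :
    HasSum (fun i => ((d (i + N + 1) : ℝ) - 1) / P d (i + N + 1)) (P d N)⁻¹ := by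
  have hterm : ∀ i, ((d (i + N + 1) : ℝ) - 1) / P d (i + N + 1)
      = (P d (i + N))⁻¹ - (P d (i + 1 + N))⁻¹ := fun i => by
    rw [Nat.add_right_comm i 1 N, inv_P_sub_inv_P_succ hd]
  have hnonneg : ∀ i, 0 ≤ ((d (i + N + 1) : ℝ) - 1) / P d (i + N + 1) := fun i =>
    div_nonneg (sub_nonneg.2 (one_le_d_succ hd _)) (P_pos hd _).le
  rw [hasSum_iff_tendsto_nat_of_nonneg hnonneg]
  simp_rw [hterm, sum_range_sub' (fun i => (P d (i + N))⁻¹), zero_add]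
  simpa using tendsto_const_nhds.sub ((tendsto_inv_P hd).comp (tendsto_add_atTop_nat N))

end

noncomputable def negaTerm (d : ℕ → ℕ) (c : ℕ → ℝ) (n : ℕ) : ℝ := (-1) ^ n * c n / P d n

lemma negaSum_eq_tsum_negaTerm (d ε : ℕ → ℕ) :
    negaSum d ε = ∑' n, negaTerm d (fun k => ε k) (n + 1) := rfl

lemma negaTerm_sub (d : ℕ → ℕ) (a b : ℕ → ℝ) (n : ℕ) :
    negaTerm d (fun k => a k - b k) n = negaTerm d a n - negaTerm d b n := by
  simp only [negaTerm]
  ring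

section

variable {d : ℕ → ℕ} {c : ℕ → ℝ} (hd : ∀ n, 1 ≤ n → 2 ≤ d n)
  (hc : ∀ n, 1 ≤ n → |c n| ≤ d n - 1)
include hd hc

lemma norm_negaTerm_succ_le (n : ℕ) :
    ‖negaTerm d c (n + 1)‖ ≤ ((d (n + 1) : ℝ) - 1) / P d (n + 1) := by
  rw [negaTerm, Real.norm_eq_abs, abs_div, abs_mul, abs_pow, abs_neg, abs_one, one_pow, one_mul,
    abs_of_pos (P_pos hd _)]
  exact div_le_div_of_nonneg_right (hc _ (by omega)) (P_pos hd _).le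

lemma summable_negaTerm_succ : Summable fun n => negaTerm d c (n + 1) :=
  (hasSum_maxDigit_tail hd 0).summable.of_norm_bounded (norm_negaTerm_succ_le hd hc)

lemma abs_tsum_negaTerm_tail_le (N : ℕ) : |∑' i, negaTerm d c (i + N + 1)| ≤ (P d N)⁻¹ :=
  tsum_of_norm_bounded (hasSum_maxDigit_tail hd N) fun i => norm_negaTerm_succ_le hd hc (i + N)

lemma tsum_negaTerm_succ_nonneg {N : ℕ} (hN : 1 ≤ N) (hzero : ∀ n, n < N → c n = 0)
    (hlead : 1 ≤ (-1) ^ N * c N) : 0 ≤ ∑' n, negaTerm d c (n + 1) := by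
  obtain ⟨k, rfl⟩ : ∃ k, N = k + 1 := ⟨N - 1, by omega⟩
  have hhead : ∑ i ∈ range (k + 1), negaTerm d c (i + 1) = negaTerm d c (k + 1) := by
    rw [sum_range_succ, sum_eq_zero fun i hi => ?_, zero_add]
    rw [negaTerm, hzero _ (by simp at hi; omega), mul_zero, zero_div]
  have hfirst_term : (P d (k + 1))⁻¹ ≤ negaTerm d c (k + 1) := by
    rw [negaTerm, inv_eq_one_div]
    exact div_le_div_of_nonneg_right hlead (P_pos hd _).le
  have htail := (abs_le.1 (abs_tsum_negaTerm_tail_le hd hc (k + 1))).1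
  rw [← (summable_negaTerm_succ hd hc).sum_add_tsum_nat_add (k + 1), hhead]
  linarith

end

theorem alternating_cantor_le_of_even_digit_lt (d ε η : ℕ → ℕ) (m : ℕ)
    (hm : 1 ≤ m) (hd : ∀ n, 1 ≤ n → 2 ≤ d n)
    (hε : ∀ n, 1 ≤ n → ε n ≤ d n - 1) (hη : ∀ n, 1 ≤ n → η n ≤ d n - 1)
    (hagree : ∀ n, n < 2 * m → ε n = η n)
    (hlt : ε (2 * m) < η (2 * m)) :
    negaSum d ε ≤ negaSum d η := by
  set c : ℕ → ℝ := fun n => (η n : ℝ) - ε n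
  have hc : ∀ n, 1 ≤ n → |c n| ≤ d n - 1 := fun n hn =>
    abs_sub_le_of_nonneg_of_le (η n).cast_nonneg (cast_digit_le hd hη n hn) (ε n).cast_nonneg
      (cast_digit_le hd hε n hn)
  have hsub : negaSum d η - negaSum d ε = ∑' n, negaTerm d c (n + 1) := by
    rw [negaSum_eq_tsum_negaTerm, negaSum_eq_tsum_negaTerm,
      ← (summable_negaTerm_succ hd (abs_cast_digit_le hd hη)).tsum_sub (summable_negaTerm_succ hd (abs_cast_digit_le hd hε))]
    simp_rw [c, negaTerm_sub]
  have hnonneg : 0 ≤ ∑' n, negaTerm d c (n + 1) := by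
    refine tsum_negaTerm_succ_nonneg hd hc (N := 2 * m) (by omega)
      (fun n hn => by simp [c, hagree n hn]) ?_
    rw [(even_two_mul m).neg_one_pow, one_mul, le_sub_iff_add_le']
    exact_mod_cast hlt
  linarith
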